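/- arXiv:2402.14716 — 2 statements merged into one kernel-verified Lean document; each statement's English description precedes it below -/
import Mathlib

section
/- The improper-proper output error satisfies the bound sup_{t≥0} |y_ip(t) − ŷ_ip(t)| ≤ (trace(P_p·M·P_i·M) − 2·trace(P̃_p^T·M·P̃_i·M̂) + trace(P̂_p·M̂·P̂_i·M̂))^{1/2} · ν^{1/2} · ‖u‖_{C^{ν−1}} · ‖u‖_{L₂}, where P̃_p := ∫₀^∞ F_J(t)·B·B̂^T·F̂_J(t)^T dt and P̃_i := Σ_{k=0}^{ν−1} F_N(k)·B·B̂^T·F̂_N(k)^T. -/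
/-!
Expanding the square and using cyclicity of the trace, `∑ₖ ‖h_ip(s,k) − ĥ_ip(s,k)‖²` is the trace of
the proper Gramian integrands at time `s` contracted with `M`, `M̂` and the improper Gramians. The
exponential decay of `exp(tJ)` and `exp(tÂ₁)` makes these integrands integrable, so integrating over
`s > 0` gives exactly the trace expression of the bound. The output error is the convolution of the
kernel error with `u(τ) ⊗ u^{(k)}(t)`; Cauchy–Schwarz in `ℝ^{m²}`, in the sum over `k` (which costs
the factor `√ν`) and in the `τ`-integral gives the claim.
-/

open MeasureTheory Matrix

/-- The matrix exponential of a real square matrix. -/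
noncomputable def mexp {d : ℕ} (X : Matrix (Fin d) (Fin d) ℝ) : Matrix (Fin d) (Fin d) ℝ :=
  NormedSpace.exp X

/-- The operator norm on real matrices, induced by the Euclidean (`ℓ²`) norms. -/
noncomputable def opNorm {d e : ℕ} (X : Matrix (Fin d) (Fin e) ℝ) : ℝ :=
  letI := Matrix.instL2OpNormedAddCommGroup (m := Fin d) (n := Fin e) (𝕜 := ℝ)
  ‖X‖

/-- Entrywise integral over `(0, ∞)` of a matrix-valued function. -/
noncomputable def matIntIoi {a b : Type*} (F : ℝ → Matrix a b ℝ) : Matrix a b ℝ :=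
  Matrix.of fun i j => ∫ t in Set.Ioi (0:ℝ), F t i j

/-- Entrywise integrability over `(0, ∞)` of a matrix-valued function. -/
def MatIntegrableIoi {a b : Type*} (F : ℝ → Matrix a b ℝ) : Prop :=
  ∀ i j, MeasureTheory.IntegrableOn (fun t => F t i j) (Set.Ioi 0)

/-- Kronecker product of two vectors in `ℝ^m`, an element of `ℝ^{m²}`. -/
def kron {m : ℕ} (a b : Fin m → ℝ) : Fin m × Fin m → ℝ := fun p => a p.1 * b p.2

/-- Vectorization of an `m × m` matrix as an element of `ℝ^{m²}`. -/
def vecm {m : ℕ} (X : Matrix (Fin m) (Fin m) ℝ) : Fin m × Fin m → ℝ := fun p => X p.1 p.2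

/-- Squared Euclidean norm of a vector. -/
def enormSq {ι : Type*} [Fintype ι] (v : ι → ℝ) : ℝ := ∑ i, (v i) ^ 2

/-- Euclidean inner product of two vectors. -/
def dotv {ι : Type*} [Fintype ι] (v w : ι → ℝ) : ℝ := ∑ i, v i * w i

open Filter Asymptotics Set

section Vectors

variable {ι : Type*} [Fintype ι]

lemma enormSq_nonneg (v : ι → ℝ) : 0 ≤ enormSq v :=
  Finset.sum_nonneg fun _ _ => sq_nonneg _

lemma abs_dotv_le (v w : ι → ℝ) : |dotv v w| ≤ √(enormSq v) * √(enormSq w) := by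
  refine (Finset.abs_sum_le_sum_abs _ _).trans ?_
  simpa [enormSq, abs_mul] using
    Real.sum_mul_le_sqrt_mul_sqrt Finset.univ (fun i => |v i|) (fun i => |w i|)

lemma dotv_sub_left (v w x : ι → ℝ) : dotv (v - w) x = dotv v x - dotv w x := by
  simp [dotv, sub_mul, Finset.sum_sub_distrib]

lemma enormSq_kron {m : ℕ} (a b : Fin m → ℝ) : enormSq (kron a b) = enormSq a * enormSq b := by
  simp [enormSq, kron, Fintype.sum_prod_type, mul_pow, ← Finset.sum_mul, ← Finset.mul_sum]

lemma continuous_enormSq : Continuous (enormSq : (ι → ℝ) → ℝ) := by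
  unfold enormSq
  fun_prop

end Vectors

lemma enormSq_vecm_sub {m : ℕ} (X Y : Matrix (Fin m) (Fin m) ℝ) :
    enormSq (vecm X - vecm Y) = (X * Xᵀ).trace - 2 * (X * Yᵀ).trace + (Y * Yᵀ).trace := by
  simp only [trace, diag, mul_apply, transpose_apply, enormSq, vecm, Pi.sub_apply,
    Fintype.sum_prod_type, Finset.mul_sum, ← Finset.sum_sub_distrib, ← Finset.sum_add_distrib]
  exact Finset.sum_congr rfl fun i _ => Finset.sum_congr rfl fun j _ => by ring

lemma Continuous.vecm {X : Type*} [TopologicalSpace X] {m : ℕ} {F : X → Matrix (Fin m) (Fin m) ℝ}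
    (hF : Continuous F) : Continuous fun x => vecm (F x) :=
  continuous_pi fun p => hF.matrix_elem p.1 p.2

section IntegralTrace

variable {a b : Type*} [Fintype a] [Fintype b]

lemma trace_mul_eq_sum_sum (P : Matrix a b ℝ) (K : Matrix b a ℝ) :
    (P * K).trace = ∑ i, ∑ j, P i j * K j i := rfl

lemma integrableOn_trace_mul {Q : ℝ → Matrix a b ℝ} (hQ : MatIntegrableIoi Q) (K : Matrix b a ℝ) :
    IntegrableOn (fun s => (Q s * K).trace) (Ioi 0) :=
  integrable_finsetSum _ fun i _ => integrable_finsetSum _ fun j _ => (hQ i j).mul_const _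

lemma trace_matIntIoi_mul {Q : ℝ → Matrix a b ℝ} (hQ : MatIntegrableIoi Q) (K : Matrix b a ℝ) :
    (matIntIoi Q * K).trace = ∫ s in Ioi 0, (Q s * K).trace := by
  simp only [trace_mul_eq_sum_sum]
  rw [integral_finsetSum _ fun i _ =>
    integrable_finsetSum _ fun j _ => (hQ i j).mul_const _]
  refine Finset.sum_congr rfl fun i _ => ?_
  rw [integral_finsetSum _ fun j _ => (hQ i j).mul_const _]
  exact Finset.sum_congr rfl fun j _ => (integral_mul_const _ _).symm

omit [Fintype a] [Fintype b] in
lemma matIntegrableIoi_transpose {Q : ℝ → Matrix a b ℝ} (hQ : MatIntegrableIoi Q) :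
    MatIntegrableIoi fun s => (Q s)ᵀ :=
  fun i j => hQ j i

omit [Fintype a] [Fintype b] in
lemma matIntIoi_transpose (Q : ℝ → Matrix a b ℝ) :
    (matIntIoi Q)ᵀ = matIntIoi fun s => (Q s)ᵀ := rfl

end IntegralTrace

section Decay

lemma abs_apply_le_opNorm {d e : ℕ} (X : Matrix (Fin d) (Fin e) ℝ) (i : Fin d) (j : Fin e) :
    |X i j| ≤ opNorm X := by
  let := Matrix.instL2OpNormedAddCommGroup (m := Fin d) (n := Fin e) (𝕜 := ℝ)
  have hcol := X.l2_opNorm_mulVec (EuclideanSpace.single j (1 : ℝ))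
  simp only [PiLp.norm_single, norm_one, mul_one] at hcol
  calc |X i j| = ‖(EuclideanSpace.equiv (Fin d) ℝ).symm (X *ᵥ EuclideanSpace.single j 1) i‖ := by
        simp
    _ ≤ ‖(EuclideanSpace.equiv (Fin d) ℝ).symm (X *ᵥ EuclideanSpace.single j 1)‖ :=
        PiLp.norm_apply_le _ i
    _ ≤ opNorm X := hcol

lemma continuous_mexp_smul {d : ℕ} (J : Matrix (Fin d) (Fin d) ℝ) :
    Continuous fun t : ℝ => mexp (t • J) := by
  -- `NormedSpace.exp` only depends on the topology, so any Banach-algebra norm on matrices will do.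
  let : NormedRing (Matrix (Fin d) (Fin d) ℝ) := Matrix.linftyOpNormedRing
  let : NormedAlgebra ℝ (Matrix (Fin d) (Fin d) ℝ) := Matrix.linftyOpNormedAlgebra
  let : NormedAlgebra ℚ (Matrix (Fin d) (Fin d) ℝ) := Matrix.linftyOpNormedAlgebra
  exact NormedSpace.exp_continuous.comp (continuous_id.smul continuous_const)

lemma isBigO_mexp_smul_apply {d : ℕ} {J : Matrix (Fin d) (Fin d) ℝ} {C α : ℝ}
    (hJ : ∀ t : ℝ, 0 ≤ t → opNorm (mexp (t • J)) ≤ C * Real.exp (-α * t)) (i j : Fin d) :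
    (fun t => mexp (t • J) i j) =O[atTop] fun t => Real.exp (-α * t) := by
  refine IsBigO.of_bound C ?_
  filter_upwards [eventually_ge_atTop 0] with t ht
  rw [Real.norm_eq_abs, Real.norm_of_nonneg (Real.exp_pos _).le]
  exact (abs_apply_le_opNorm _ i j).trans (hJ t ht)

variable {l : Filter ℝ} {g g₁ g₂ : ℝ → ℝ}

lemma isBigO_fromBlocks_zero_apply {p q : Type*} {X : ℝ → Matrix p p ℝ}
    (hX : ∀ i j, (fun t => X t i j) =O[l] g) (i j : p ⊕ q) :
    (fun t => (fromBlocks (X t) 0 0 0 : Matrix (p ⊕ q) (p ⊕ q) ℝ) i j) =O[l] g := by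
  rcases i with i | i <;> rcases j with j | j <;> simp [hX, isBigO_zero]

lemma isBigO_mul_apply {a b c : Type*} [Fintype b] {F₁ : ℝ → Matrix a b ℝ} {F₂ : ℝ → Matrix b c ℝ}
    (h₁ : ∀ i k, (fun t => F₁ t i k) =O[l] g₁) (h₂ : ∀ k j, (fun t => F₂ t k j) =O[l] g₂)
    (i : a) (j : c) : (fun t => (F₁ t * F₂ t) i j) =O[l] (g₁ * g₂) := by
  simp only [mul_apply]
  exact IsBigO.fun_sum fun k _ => (h₁ i k).mul (h₂ k j)

lemma isBigO_const_mul_apply {a b c : Type*} [Fintype b] (L : Matrix a b ℝ) {F : ℝ → Matrix b c ℝ}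
    (hF : ∀ k j, (fun t => F t k j) =O[l] g) (i : a) (j : c) :
    (fun t => (L * F t) i j) =O[l] g := by
  simp only [mul_apply]
  exact IsBigO.fun_sum fun k _ => (hF k j).const_mul_left _

lemma isBigO_mul_const_apply {a b c : Type*} [Fintype b] {F : ℝ → Matrix a b ℝ} (R : Matrix b c ℝ)
    (hF : ∀ i k, (fun t => F t i k) =O[l] g) (i : a) (j : c) :
    (fun t => (F t * R) i j) =O[l] g := by
  simp only [mul_apply]
  exact IsBigO.fun_sum fun k _ => ((hF i k).const_mul_left (R k j)).congr_left fun t => mul_comm _ _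

def IsExpDecaying {a b : Type*} (F : ℝ → Matrix a b ℝ) (α : ℝ) : Prop :=
  Continuous F ∧ ∀ i j, (fun t => F t i j) =O[atTop] fun t => Real.exp (-α * t)

lemma IsExpDecaying.const_mul_mul_const {a b c d : Type*} [Fintype b] [Fintype c]
    {F : ℝ → Matrix b c ℝ} {α : ℝ} (hF : IsExpDecaying F α) (L : Matrix a b ℝ)
    (R : Matrix c d ℝ) : IsExpDecaying (fun t => L * F t * R) α :=
  ⟨(continuous_const.matrix_mul hF.1).matrix_mul continuous_const,
    isBigO_mul_const_apply R (isBigO_const_mul_apply L hF.2)⟩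

lemma isExpDecaying_fromBlocks_mexp_smul {d : ℕ} {q : Type*} {J : Matrix (Fin d) (Fin d) ℝ}
    {C α : ℝ} (hJ : ∀ t : ℝ, 0 ≤ t → opNorm (mexp (t • J)) ≤ C * Real.exp (-α * t)) :
    IsExpDecaying (fun t => (fromBlocks (mexp (t • J)) 0 0 0 : Matrix (Fin d ⊕ q) (Fin d ⊕ q) ℝ))
      α :=
  ⟨(continuous_mexp_smul J).matrix_fromBlocks continuous_const continuous_const continuous_const,
    isBigO_fromBlocks_zero_apply (isBigO_mexp_smul_apply hJ)⟩

end Decay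

section Gramian

def ipKernel {n : Type*} [Fintype n] {m : ℕ} (B : Matrix n (Fin m) ℝ) (N M F : Matrix n n ℝ) :
    Matrix (Fin m) (Fin m) ℝ :=
  Bᵀ * Nᵀ * M * F * B

variable {n₁ n₂ : Type*} [Fintype n₁] [Fintype n₂] {m : ℕ}

lemma matIntegrableIoi_gramian {F₁ : ℝ → Matrix n₁ n₁ ℝ} {F₂ : ℝ → Matrix n₂ n₂ ℝ} {α₁ α₂ : ℝ}
    (h₁ : IsExpDecaying F₁ α₁) (h₂ : IsExpDecaying F₂ α₂) (hα₁ : 0 < α₁) (hα₂ : 0 < α₂)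
    (B₁ : Matrix n₁ (Fin m) ℝ) (B₂ : Matrix n₂ (Fin m) ℝ) :
    MatIntegrableIoi fun t => F₁ t * B₁ * B₂ᵀ * (F₂ t)ᵀ := by
  intro i j
  have hO := isBigO_mul_apply (isBigO_mul_const_apply B₂ᵀ (isBigO_mul_const_apply B₁ h₁.2))
    (F₂ := fun t => (F₂ t)ᵀ) (fun k j => h₂.2 j k) i j
  refine integrable_of_isBigO_exp_neg (add_pos hα₁ hα₂) ?_ (hO.congr_right fun t => ?_)
  · exact ((((h₁.1.matrix_mul continuous_const).matrix_mul continuous_const).matrix_mul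
      h₂.1.matrix_transpose).matrix_elem i j).continuousOn
  · simp only [Pi.mul_apply, ← Real.exp_add]
    ring_nf

lemma matIntIoi_gramian_transpose (F : ℝ → Matrix n₁ n₁ ℝ) (B : Matrix n₁ (Fin m) ℝ) :
    (matIntIoi fun t => F t * B * Bᵀ * (F t)ᵀ)ᵀ = matIntIoi fun t => F t * B * Bᵀ * (F t)ᵀ := by
  simp only [matIntIoi_transpose, transpose_mul, transpose_transpose, Matrix.mul_assoc]

lemma trace_ipKernel_mul_transpose (B₁ : Matrix n₁ (Fin m) ℝ) (B₂ : Matrix n₂ (Fin m) ℝ)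
    (N₁ M₁ F₁ : Matrix n₁ n₁ ℝ) (N₂ M₂ F₂ : Matrix n₂ n₂ ℝ) (hM₁ : M₁.IsSymm) :
    (ipKernel B₁ N₁ M₁ F₁ * (ipKernel B₂ N₂ M₂ F₂)ᵀ).trace =
      ((F₁ * B₁ * B₂ᵀ * F₂ᵀ)ᵀ * (M₁ * ((N₁ * B₁ * B₂ᵀ * N₂ᵀ) * M₂))).trace := by
  conv_rhs => rw [← trace_transpose]
  simp only [ipKernel, transpose_mul, transpose_transpose, hM₁.eq, Matrix.mul_assoc]
  conv_rhs => rw [← Matrix.mul_assoc, ← Matrix.mul_assoc, trace_mul_comm]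
  simp only [Matrix.mul_assoc]

variable (F₁ : ℝ → Matrix n₁ n₁ ℝ) (F₂ : ℝ → Matrix n₂ n₂ ℝ) (N₁ : ℕ → Matrix n₁ n₁ ℝ)
  (N₂ : ℕ → Matrix n₂ n₂ ℝ) (B₁ : Matrix n₁ (Fin m) ℝ) (B₂ : Matrix n₂ (Fin m) ℝ)
  {M₁ : Matrix n₁ n₁ ℝ} {M₂ : Matrix n₂ n₂ ℝ} (ν : ℕ)

lemma sum_trace_ipKernel_mul_transpose (hM₁ : M₁.IsSymm) (t : ℝ) :
    ∑ k ∈ Finset.range ν,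
        (ipKernel B₁ (N₁ k) M₁ (F₁ t) * (ipKernel B₂ (N₂ k) M₂ (F₂ t))ᵀ).trace =
      ((F₁ t * B₁ * B₂ᵀ * (F₂ t)ᵀ)ᵀ *
        (M₁ * ((∑ k ∈ Finset.range ν, N₁ k * B₁ * B₂ᵀ * (N₂ k)ᵀ) * M₂))).trace := by
  simp only [trace_ipKernel_mul_transpose _ _ _ _ _ _ _ _ hM₁, Matrix.sum_mul,
    Matrix.mul_sum, trace_sum]

lemma integrableOn_sum_trace_ipKernel_mul_transpose (hM₁ : M₁.IsSymm)
    (hQ : MatIntegrableIoi fun t => F₁ t * B₁ * B₂ᵀ * (F₂ t)ᵀ) :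
    IntegrableOn (fun t => ∑ k ∈ Finset.range ν,
      (ipKernel B₁ (N₁ k) M₁ (F₁ t) * (ipKernel B₂ (N₂ k) M₂ (F₂ t))ᵀ).trace) (Ioi 0) := by
  simp only [sum_trace_ipKernel_mul_transpose _ _ _ _ _ _ _ hM₁]
  exact integrableOn_trace_mul (matIntegrableIoi_transpose hQ) _

lemma trace_gramian_mul_eq_integral (hM₁ : M₁.IsSymm)
    (hQ : MatIntegrableIoi fun t => F₁ t * B₁ * B₂ᵀ * (F₂ t)ᵀ) :
    ((matIntIoi fun t => F₁ t * B₁ * B₂ᵀ * (F₂ t)ᵀ)ᵀ * M₁ *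
        (∑ k ∈ Finset.range ν, N₁ k * B₁ * B₂ᵀ * (N₂ k)ᵀ) * M₂).trace =
      ∫ t in Ioi 0, ∑ k ∈ Finset.range ν,
        (ipKernel B₁ (N₁ k) M₁ (F₁ t) * (ipKernel B₂ (N₂ k) M₂ (F₂ t))ᵀ).trace := by
  simp only [sum_trace_ipKernel_mul_transpose _ _ _ _ _ _ _ hM₁]
  rw [Matrix.mul_assoc, Matrix.mul_assoc, matIntIoi_transpose]
  exact trace_matIntIoi_mul (matIntegrableIoi_transpose hQ) _

lemma sum_enormSq_ipKernel_sub (t : ℝ) :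
    ∑ k ∈ Finset.range ν,
        enormSq (vecm (ipKernel B₁ (N₁ k) M₁ (F₁ t)) - vecm (ipKernel B₂ (N₂ k) M₂ (F₂ t))) =
      ∑ k ∈ Finset.range ν,
          (ipKernel B₁ (N₁ k) M₁ (F₁ t) * (ipKernel B₁ (N₁ k) M₁ (F₁ t))ᵀ).trace -
        2 * ∑ k ∈ Finset.range ν,
          (ipKernel B₁ (N₁ k) M₁ (F₁ t) * (ipKernel B₂ (N₂ k) M₂ (F₂ t))ᵀ).trace +
        ∑ k ∈ Finset.range ν,
          (ipKernel B₂ (N₂ k) M₂ (F₂ t) * (ipKernel B₂ (N₂ k) M₂ (F₂ t))ᵀ).trace := by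
  simp only [enormSq_vecm_sub, Finset.sum_add_distrib, Finset.sum_sub_distrib, Finset.mul_sum]

variable {F₁ F₂ B₁ B₂} in
lemma integrableOn_sum_enormSq_ipKernel_sub (hM₁ : M₁.IsSymm) (hM₂ : M₂.IsSymm)
    (h₁₁ : MatIntegrableIoi fun t => F₁ t * B₁ * B₁ᵀ * (F₁ t)ᵀ)
    (h₁₂ : MatIntegrableIoi fun t => F₁ t * B₁ * B₂ᵀ * (F₂ t)ᵀ)
    (h₂₂ : MatIntegrableIoi fun t => F₂ t * B₂ * B₂ᵀ * (F₂ t)ᵀ) :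
    IntegrableOn (fun t => ∑ k ∈ Finset.range ν,
      enormSq (vecm (ipKernel B₁ (N₁ k) M₁ (F₁ t)) - vecm (ipKernel B₂ (N₂ k) M₂ (F₂ t))))
      (Ioi 0) := by
  simp only [sum_enormSq_ipKernel_sub]
  exact ((integrableOn_sum_trace_ipKernel_mul_transpose _ _ _ _ _ _ _ hM₁ h₁₁).sub
    ((integrableOn_sum_trace_ipKernel_mul_transpose _ _ _ _ _ _ _ hM₁ h₁₂).const_mul 2)).add
    (integrableOn_sum_trace_ipKernel_mul_transpose _ _ _ _ _ _ _ hM₂ h₂₂)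

variable {F₁ F₂ B₁ B₂} in
lemma integral_sum_enormSq_ipKernel_sub (hM₁ : M₁.IsSymm) (hM₂ : M₂.IsSymm)
    (h₁₁ : MatIntegrableIoi fun t => F₁ t * B₁ * B₁ᵀ * (F₁ t)ᵀ)
    (h₁₂ : MatIntegrableIoi fun t => F₁ t * B₁ * B₂ᵀ * (F₂ t)ᵀ)
    (h₂₂ : MatIntegrableIoi fun t => F₂ t * B₂ * B₂ᵀ * (F₂ t)ᵀ) :
    ∫ t in Ioi 0, ∑ k ∈ Finset.range ν,
        enormSq (vecm (ipKernel B₁ (N₁ k) M₁ (F₁ t)) - vecm (ipKernel B₂ (N₂ k) M₂ (F₂ t))) =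
      ((matIntIoi fun t => F₁ t * B₁ * B₁ᵀ * (F₁ t)ᵀ) * M₁ *
          (∑ k ∈ Finset.range ν, N₁ k * B₁ * B₁ᵀ * (N₁ k)ᵀ) * M₁).trace -
        2 * ((matIntIoi fun t => F₁ t * B₁ * B₂ᵀ * (F₂ t)ᵀ)ᵀ * M₁ *
          (∑ k ∈ Finset.range ν, N₁ k * B₁ * B₂ᵀ * (N₂ k)ᵀ) * M₂).trace +
        ((matIntIoi fun t => F₂ t * B₂ * B₂ᵀ * (F₂ t)ᵀ) * M₂ *
          (∑ k ∈ Finset.range ν, N₂ k * B₂ * B₂ᵀ * (N₂ k)ᵀ) * M₂).trace := by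
  have I₁₁ := integrableOn_sum_trace_ipKernel_mul_transpose _ _ N₁ N₁ _ _ ν (M₂ := M₁) hM₁ h₁₁
  have I₁₂ := integrableOn_sum_trace_ipKernel_mul_transpose _ _ N₁ N₂ _ _ ν (M₂ := M₂) hM₁ h₁₂
  have I₂₂ := integrableOn_sum_trace_ipKernel_mul_transpose _ _ N₂ N₂ _ _ ν (M₂ := M₂) hM₂ h₂₂
  simp only [sum_enormSq_ipKernel_sub]
  rw [integral_add ?_ I₂₂, integral_sub I₁₁ (I₁₂.const_mul 2),
    integral_const_mul, ← matIntIoi_gramian_transpose F₁, ← matIntIoi_gramian_transpose F₂,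
    trace_gramian_mul_eq_integral _ _ _ _ _ _ _ hM₁ h₁₁,
    trace_gramian_mul_eq_integral _ _ _ _ _ _ _ hM₁ h₁₂,
    trace_gramian_mul_eq_integral _ _ _ _ _ _ _ hM₂ h₂₂]
  exact I₁₁.sub (I₁₂.const_mul 2)

end Gramian

lemma integral_sqrt_mul_sqrt_le {α : Type*} [MeasurableSpace α] {μ : Measure α} {f g : α → ℝ}
    (hf₀ : 0 ≤ f) (hg₀ : 0 ≤ g) (hf : Integrable f μ) (hg : Integrable g μ) :
    ∫ x, √(f x) * √(g x) ∂μ ≤ √(∫ x, f x ∂μ) * √(∫ x, g x ∂μ) := by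
  have hL2 : ∀ {h : α → ℝ}, 0 ≤ h → Integrable h μ → MemLp (fun x => √(h x)) (ENNReal.ofReal 2) μ :=
    fun {h} h₀ hh => by
      rw [ENNReal.ofReal_ofNat, memLp_two_iff_integrable_sq
        (Real.continuous_sqrt.comp_aestronglyMeasurable hh.aestronglyMeasurable)]
      exact hh.congr (Eventually.of_forall fun x => (Real.sq_sqrt (h₀ x)).symm)
  have := integral_mul_le_Lp_mul_Lq_of_nonneg Real.HolderConjugate.two_two
    (Eventually.of_forall fun x => Real.sqrt_nonneg (f x))
    (Eventually.of_forall fun x => Real.sqrt_nonneg (g x)) (hL2 hf₀ hf) (hL2 hg₀ hg)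
  simpa only [Real.rpow_two, Real.sq_sqrt (hf₀ _), Real.sq_sqrt (hg₀ _), ← Real.sqrt_eq_rpow]
    using this

lemma setIntegral_Ioc_comp_sub_left (f : ℝ → ℝ) {t : ℝ} (ht : 0 ≤ t) :
    ∫ τ in Ioc 0 t, f (t - τ) = ∫ s in Ioc 0 t, f s := by
  rw [← intervalIntegral.integral_of_le ht, ← intervalIntegral.integral_of_le ht,
    intervalIntegral.integral_comp_sub_left, sub_self, sub_zero]

section Convolution

variable {m ν : ℕ}

lemma abs_sum_dotv_kron_le (h : ℕ → Fin m × Fin m → ℝ) (a : Fin m → ℝ) {w : ℕ → Fin m → ℝ}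
    {c : ℝ} (hc : 0 ≤ c) (hw : ∀ k < ν, √(enormSq (w k)) ≤ c) :
    |∑ k ∈ Finset.range ν, dotv (h k) (kron a (w k))| ≤
      √ν * c * (√(∑ k ∈ Finset.range ν, enormSq (h k)) * √(enormSq a)) := by
  have hcs : ∑ k ∈ Finset.range ν, √(enormSq (h k)) ≤
      √(∑ k ∈ Finset.range ν, enormSq (h k)) * √ν := by
    simpa using Real.sum_sqrt_mul_sqrt_le (Finset.range ν) (fun k => enormSq_nonneg (h k))
      (fun _ => zero_le_one)
  calc |∑ k ∈ Finset.range ν, dotv (h k) (kron a (w k))|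
      ≤ ∑ k ∈ Finset.range ν, √(enormSq (h k)) * (√(enormSq a) * c) := by
        refine (Finset.abs_sum_le_sum_abs _ _).trans (Finset.sum_le_sum fun k hk => ?_)
        refine (abs_dotv_le _ _).trans ?_
        rw [enormSq_kron, Real.sqrt_mul (enormSq_nonneg a)]
        gcongr
        exact hw k (Finset.mem_range.mp hk)
    _ = c * √(enormSq a) * ∑ k ∈ Finset.range ν, √(enormSq (h k)) := by
        rw [← Finset.sum_mul]; ring
    _ ≤ c * √(enormSq a) * (√(∑ k ∈ Finset.range ν, enormSq (h k)) * √ν) := by gcongr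
    _ = √ν * c * (√(∑ k ∈ Finset.range ν, enormSq (h k)) * √(enormSq a)) := by ring

variable {h h₁ h₂ : ℝ → ℕ → Fin m × Fin m → ℝ} {u : ℝ → Fin m → ℝ}

lemma continuous_sum_dotv_kron (hh : ∀ k, Continuous fun s => h s k) (hu : Continuous u)
    (w : ℕ → Fin m → ℝ) (t : ℝ) :
    Continuous fun τ => ∑ k ∈ Finset.range ν, dotv (h (t - τ) k) (kron (u τ) (w k)) := by
  unfold dotv kron
  fun_prop

lemma integral_sum_dotv_kron_sub (hh₁ : ∀ k, Continuous fun s => h₁ s k)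
    (hh₂ : ∀ k, Continuous fun s => h₂ s k) (hu : Continuous u) (w : ℕ → Fin m → ℝ) (t : ℝ) :
    (∫ τ in Ioc 0 t, ∑ k ∈ Finset.range ν, dotv (h₁ (t - τ) k) (kron (u τ) (w k))) -
        ∫ τ in Ioc 0 t, ∑ k ∈ Finset.range ν, dotv (h₂ (t - τ) k) (kron (u τ) (w k)) =
      ∫ τ in Ioc 0 t, ∑ k ∈ Finset.range ν,
        dotv (h₁ (t - τ) k - h₂ (t - τ) k) (kron (u τ) (w k)) := by
  rw [← integral_sub (continuous_sum_dotv_kron hh₁ hu w t).integrableOn_Ioc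
    (continuous_sum_dotv_kron hh₂ hu w t).integrableOn_Ioc]
  simp only [dotv_sub_left, Finset.sum_sub_distrib]

lemma abs_integral_sum_dotv_kron_le (hh : ∀ k, Continuous fun s => h s k)
    (hD : IntegrableOn (fun s => ∑ k ∈ Finset.range ν, enormSq (h s k)) (Ioi 0))
    (hu : Continuous u) (husq : IntegrableOn (fun τ => enormSq (u τ)) (Ioi 0))
    {w : ℕ → Fin m → ℝ} {c : ℝ} (hc : 0 ≤ c) (hw : ∀ k < ν, √(enormSq (w k)) ≤ c)
    {t : ℝ} (ht : 0 ≤ t) :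
    |∫ τ in Ioc 0 t, ∑ k ∈ Finset.range ν, dotv (h (t - τ) k) (kron (u τ) (w k))| ≤
      √(∫ s in Ioi 0, ∑ k ∈ Finset.range ν, enormSq (h s k)) * √ν * c *
        √(∫ τ in Ioi 0, enormSq (u τ)) := by
  set D := fun s => ∑ k ∈ Finset.range ν, enormSq (h s k)
  have hD₀ : 0 ≤ D := fun s => Finset.sum_nonneg fun k _ => enormSq_nonneg _
  have hDc : Continuous D := continuous_finsetSum _ fun k _ => continuous_enormSq.comp (hh k)
  have huc : Continuous fun τ => enormSq (u τ) := continuous_enormSq.comp hu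
  have hDt : Continuous fun τ => D (t - τ) := hDc.comp (continuous_sub_left t)
  calc |∫ τ in Ioc 0 t, ∑ k ∈ Finset.range ν, dotv (h (t - τ) k) (kron (u τ) (w k))|
      ≤ ∫ τ in Ioc 0 t, √ν * c * (√(D (t - τ)) * √(enormSq (u τ))) := by
        have hbound : Continuous fun τ => √ν * c * (√(D (t - τ)) * √(enormSq (u τ))) :=
          continuous_const.mul (hDt.sqrt.mul huc.sqrt)
        rw [← Real.norm_eq_abs]
        refine norm_integral_le_of_norm_le (hbound.integrableOn_Ioc (μ := volume))
          (Eventually.of_forall fun τ => ?_)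
        exact abs_sum_dotv_kron_le _ _ hc hw
    _ = √ν * c * ∫ τ in Ioc 0 t, √(D (t - τ)) * √(enormSq (u τ)) := integral_const_mul _ _
    _ ≤ √ν * c * (√(∫ τ in Ioc 0 t, D (t - τ)) * √(∫ τ in Ioc 0 t, enormSq (u τ))) := by
        gcongr
        exact integral_sqrt_mul_sqrt_le (fun τ => hD₀ (t - τ)) (fun τ => enormSq_nonneg _)
          hDt.integrableOn_Ioc huc.integrableOn_Ioc
    _ ≤ √ν * c * (√(∫ s in Ioi 0, D s) * √(∫ τ in Ioi 0, enormSq (u τ))) := by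
        rw [setIntegral_Ioc_comp_sub_left D ht]
        gcongr ?_ * (√?_ * √?_)
        · exact setIntegral_mono_set hD (Eventually.of_forall hD₀)
            Ioc_subset_Ioi_self.eventuallyLE
        · exact setIntegral_mono_set husq (Eventually.of_forall fun τ => enormSq_nonneg _)
            Ioc_subset_Ioi_self.eventuallyLE
    _ = _ := by ring

end Convolution

lemma le_ciSup_fin_ciSup_nonneg {ν : ℕ} {f : ℕ → ℝ → ℝ}
    (hf : ∀ k < ν, ∃ c : ℝ, ∀ t : ℝ, 0 ≤ t → f k t ≤ c) {k : ℕ} (hk : k < ν) {t : ℝ} (ht : 0 ≤ t) :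
    f k t ≤ ⨆ i : Fin ν, ⨆ s : {s : ℝ // 0 ≤ s}, f i.1 s.1 := by
  obtain ⟨c, hc⟩ := hf k hk
  have hbdd : BddAbove (range fun s : {s : ℝ // 0 ≤ s} => f k s.1) :=
    ⟨c, forall_mem_range.2 fun s => hc s.1 s.2⟩
  exact (le_ciSup hbdd ⟨t, ht⟩).trans
    (le_ciSup (f := fun i : Fin ν => ⨆ s : {s : ℝ // 0 ≤ s}, f i.1 s.1)
      (finite_range _).bddAbove ⟨k, hk⟩)

theorem improper_proper_output_error_trace_bound_general
    {nf ni m : ℕ} (ν : ℕ)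
    -- Weierstraß canonical form data for the full-order system
    (Winv Tinv : Matrix (Fin nf ⊕ Fin ni) (Fin nf ⊕ Fin ni) ℝ)
    (J : Matrix (Fin nf) (Fin nf) ℝ)
    (C α : ℝ) (hα : 0 < α)
    (hJ : ∀ t : ℝ, 0 ≤ t → opNorm (mexp (t • J)) ≤ C * Real.exp (-α * t))
    (B : Matrix (Fin nf ⊕ Fin ni) (Fin m) ℝ)
    (M : Matrix (Fin nf ⊕ Fin ni) (Fin nf ⊕ Fin ni) ℝ) (hM : M.IsSymm)
    -- fundamental solution matrices
    (FJ : ℝ → Matrix (Fin nf ⊕ Fin ni) (Fin nf ⊕ Fin ni) ℝ)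
    (hFJ : ∀ t : ℝ, FJ t = Tinv * fromBlocks (mexp (t • J)) 0 0 0 * Winv)
    (FN : ℕ → Matrix (Fin nf ⊕ Fin ni) (Fin nf ⊕ Fin ni) ℝ)
    -- proper and improper controllability Gramians
    (Pp : Matrix (Fin nf ⊕ Fin ni) (Fin nf ⊕ Fin ni) ℝ)
    (hPp : Pp = matIntIoi fun t => FJ t * B * Bᵀ * (FJ t)ᵀ)
    (Pimp : Matrix (Fin nf ⊕ Fin ni) (Fin nf ⊕ Fin ni) ℝ)
    (hPimp : Pimp = ∑ k ∈ Finset.range ν, FN k * B * Bᵀ * (FN k)ᵀ)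
    -- reduced-order data
    {rf ri : ℕ}
    (A1r : Matrix (Fin rf) (Fin rf) ℝ)
    (Cr αr : ℝ) (hαr : 0 < αr)
    (hA1r : ∀ t : ℝ, 0 ≤ t → opNorm (mexp (t • A1r)) ≤ Cr * Real.exp (-αr * t))
    (Br : Matrix (Fin rf ⊕ Fin ri) (Fin m) ℝ)
    (Mr : Matrix (Fin rf ⊕ Fin ri) (Fin rf ⊕ Fin ri) ℝ) (hMr : Mr.IsSymm)
    (FJr : ℝ → Matrix (Fin rf ⊕ Fin ri) (Fin rf ⊕ Fin ri) ℝ)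
    (hFJr : ∀ t : ℝ, FJr t = fromBlocks (mexp (t • A1r)) 0 0 0)
    (FNr : ℕ → Matrix (Fin rf ⊕ Fin ri) (Fin rf ⊕ Fin ri) ℝ)
    -- improper-proper kernels of the full-order and reduced-order systems
    (hip : ℝ → ℕ → Fin m × Fin m → ℝ)
    (hhip : ∀ (t : ℝ) (k : ℕ), hip t k = vecm (Bᵀ * (FN k)ᵀ * M * FJ t * B))
    (hipr : ℝ → ℕ → Fin m × Fin m → ℝ)
    (hhipr : ∀ (t : ℝ) (k : ℕ), hipr t k = vecm (Brᵀ * (FNr k)ᵀ * Mr * FJr t * Br))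
    -- a (ν−1)-times continuously differentiable, square-integrable input with bounded
    -- derivatives
    (u : ℝ → Fin m → ℝ) (hu : ContDiff ℝ ((ν - 1 : ℕ) : ℕ∞) u)
    (husq : MeasureTheory.IntegrableOn (fun τ => enormSq (u τ)) (Set.Ioi 0))
    (hubd : ∀ k < ν, ∃ c : ℝ, ∀ t : ℝ, 0 ≤ t → Real.sqrt (enormSq (iteratedDeriv k u t)) ≤ c)
    -- improper-proper outputs of the full-order and reduced-order systems
    (yip yipr : ℝ → ℝ)
    (hyip : ∀ t : ℝ, yip t = ∫ τ in Set.Ioc (0:ℝ) t,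
      ∑ k ∈ Finset.range ν, dotv (hip (t - τ) k) (kron (u τ) (iteratedDeriv k u t)))
    (hyipr : ∀ t : ℝ, yipr t = ∫ τ in Set.Ioc (0:ℝ) t,
      ∑ k ∈ Finset.range ν, dotv (hipr (t - τ) k) (kron (u τ) (iteratedDeriv k u t)))
    -- the C^{ν−1}-norm and the L₂-norm of u
    (uC : ℝ)
    (huC : uC = ⨆ k : Fin ν, ⨆ t : {s : ℝ // 0 ≤ s},
      Real.sqrt (enormSq (iteratedDeriv k.1 u t.1)))
    (uL2 : ℝ) (huL2 : uL2 = Real.sqrt (∫ τ in Set.Ioi (0:ℝ), enormSq (u τ)))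
    -- the reduced proper and improper Gramians
    (Ppr : Matrix (Fin rf ⊕ Fin ri) (Fin rf ⊕ Fin ri) ℝ)
    (hPpr : Ppr = matIntIoi fun t => FJr t * Br * Brᵀ * (FJr t)ᵀ)
    (Pimpr : Matrix (Fin rf ⊕ Fin ri) (Fin rf ⊕ Fin ri) ℝ)
    (hPimpr : Pimpr = ∑ k ∈ Finset.range ν, FNr k * Br * Brᵀ * (FNr k)ᵀ)
    -- the mixed proper and improper Gramians
    (Ptp : Matrix (Fin nf ⊕ Fin ni) (Fin rf ⊕ Fin ri) ℝ)
    (hPtp : Ptp = matIntIoi fun t => FJ t * B * Brᵀ * (FJr t)ᵀ)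
    (Pti : Matrix (Fin nf ⊕ Fin ni) (Fin rf ⊕ Fin ri) ℝ)
    (hPti : Pti = ∑ k ∈ Finset.range ν, FN k * B * Brᵀ * (FNr k)ᵀ)
    :
    ∀ t : ℝ, 0 ≤ t → |yip t - yipr t| ≤
      Real.sqrt (Matrix.trace (Pp * M * Pimp * M) - 2 * Matrix.trace (Ptpᵀ * M * Pti * Mr) +
        Matrix.trace (Ppr * Mr * Pimpr * Mr)) * Real.sqrt (ν : ℝ) * uC * uL2 := by
  intro t ht
  have hFJd : IsExpDecaying FJ α :=
    funext hFJ ▸ (isExpDecaying_fromBlocks_mexp_smul hJ).const_mul_mul_const Tinv Winv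
  have hFJrd : IsExpDecaying FJr αr := funext hFJr ▸ isExpDecaying_fromBlocks_mexp_smul hA1r
  have h₁₁ := matIntegrableIoi_gramian hFJd hFJd hα hα B B
  have h₁₂ := matIntegrableIoi_gramian hFJd hFJrd hα hαr B Br
  have h₂₂ := matIntegrableIoi_gramian hFJrd hFJrd hαr hαr Br Br
  have hipc : ∀ k, Continuous fun s => hip s k := fun k => by
    simpa only [hhip] using ((continuous_const.matrix_mul hFJd.1).matrix_mul continuous_const).vecm
  have hiprc : ∀ k, Continuous fun s => hipr s k := fun k => by
    simpa only [hhipr] using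
      ((continuous_const.matrix_mul hFJrd.1).matrix_mul continuous_const).vecm
  have hD : IntegrableOn (fun s => ∑ k ∈ Finset.range ν, enormSq (hip s k - hipr s k)) (Ioi 0) := by
    simp only [hhip, hhipr]
    exact integrableOn_sum_enormSq_ipKernel_sub FN FNr ν hM hMr h₁₁ h₁₂ h₂₂
  have hTR : (Pp * M * Pimp * M).trace - 2 * (Ptpᵀ * M * Pti * Mr).trace +
      (Ppr * Mr * Pimpr * Mr).trace =
      ∫ s in Ioi 0, ∑ k ∈ Finset.range ν, enormSq (hip s k - hipr s k) := by
    simp only [hhip, hhipr, hPp, hPimp, hPtp, hPti, hPpr, hPimpr]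
    exact (integral_sum_enormSq_ipKernel_sub FN FNr ν hM hMr h₁₁ h₁₂ h₂₂).symm
  have huC₀ : 0 ≤ uC :=
    huC ▸ Real.iSup_nonneg fun _ => Real.iSup_nonneg fun _ => Real.sqrt_nonneg _
  rw [hyip, hyipr, integral_sum_dotv_kron_sub hipc hiprc hu.continuous, hTR, huL2]
  exact abs_integral_sum_dotv_kron_le (h := fun s k => hip s k - hipr s k)
    (fun k => (hipc k).sub (hiprc k)) hD hu.continuous husq huC₀
    (fun k hk => huC ▸ le_ciSup_fin_ciSup_nonneg hubd hk ht) ht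

/-- The improper-proper output error satisfies
`sup_{t≥0} |y_ip(t) − ŷ_ip(t)| ≤
  (trace(P_p·M·P_i·M) − 2·trace(P̃_pᵀ·M·P̃_i·M̂) + trace(P̂_p·M̂·P̂_i·M̂))^{1/2} · ν^{1/2} ·
  ‖u‖_{C^{ν−1}} · ‖u‖_{L₂}`. -/
theorem improper_proper_output_error_trace_bound
    {nf ni m : ℕ} (hm : 0 < m) (ν : ℕ) (hν : 0 < ν)
    -- Weierstraß canonical form data for the full-order system
    (W T Winv Tinv : Matrix (Fin nf ⊕ Fin ni) (Fin nf ⊕ Fin ni) ℝ)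
    (hW : W * Winv = 1) (hW' : Winv * W = 1)
    (hT : T * Tinv = 1) (hT' : Tinv * T = 1)
    (J : Matrix (Fin nf) (Fin nf) ℝ) (N : Matrix (Fin ni) (Fin ni) ℝ) (hN : N ^ ν = 0)
    (C α : ℝ) (hC : 0 < C) (hα : 0 < α)
    (hJ : ∀ t : ℝ, 0 ≤ t → opNorm (mexp (t • J)) ≤ C * Real.exp (-α * t))
    (E A : Matrix (Fin nf ⊕ Fin ni) (Fin nf ⊕ Fin ni) ℝ)
    (hE : E = W * fromBlocks 1 0 0 N * T)
    (hA : A = W * fromBlocks J 0 0 1 * T)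
    (B : Matrix (Fin nf ⊕ Fin ni) (Fin m) ℝ)
    (M : Matrix (Fin nf ⊕ Fin ni) (Fin nf ⊕ Fin ni) ℝ) (hM : M.IsSymm)
    -- spectral projectors
    (Pr Pl : Matrix (Fin nf ⊕ Fin ni) (Fin nf ⊕ Fin ni) ℝ)
    (hPr : Pr = Tinv * fromBlocks 1 0 0 0 * T)
    (hPl : Pl = W * fromBlocks 1 0 0 0 * Winv)
    -- fundamental solution matrices
    (FJ : ℝ → Matrix (Fin nf ⊕ Fin ni) (Fin nf ⊕ Fin ni) ℝ)
    (hFJ : ∀ t : ℝ, FJ t = Tinv * fromBlocks (mexp (t • J)) 0 0 0 * Winv)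
    (FN : ℕ → Matrix (Fin nf ⊕ Fin ni) (Fin nf ⊕ Fin ni) ℝ)
    (hFN : ∀ k : ℕ, FN k = Tinv * fromBlocks 0 0 0 (-(N ^ k)) * Winv)
    -- proper and improper controllability Gramians
    (Pp : Matrix (Fin nf ⊕ Fin ni) (Fin nf ⊕ Fin ni) ℝ)
    (hPp : Pp = matIntIoi fun t => FJ t * B * Bᵀ * (FJ t)ᵀ)
    (Pimp : Matrix (Fin nf ⊕ Fin ni) (Fin nf ⊕ Fin ni) ℝ)
    (hPimp : Pimp = ∑ k ∈ Finset.range ν, FN k * B * Bᵀ * (FN k)ᵀ)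
    -- reduced-order data
    {rf ri : ℕ}
    (A1r : Matrix (Fin rf) (Fin rf) ℝ) (E2r : Matrix (Fin ri) (Fin ri) ℝ) (hE2r : E2r ^ ν = 0)
    (Cr αr : ℝ) (hCr : 0 < Cr) (hαr : 0 < αr)
    (hA1r : ∀ t : ℝ, 0 ≤ t → opNorm (mexp (t • A1r)) ≤ Cr * Real.exp (-αr * t))
    (Br : Matrix (Fin rf ⊕ Fin ri) (Fin m) ℝ)
    (Mr : Matrix (Fin rf ⊕ Fin ri) (Fin rf ⊕ Fin ri) ℝ) (hMr : Mr.IsSymm)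
    (FJr : ℝ → Matrix (Fin rf ⊕ Fin ri) (Fin rf ⊕ Fin ri) ℝ)
    (hFJr : ∀ t : ℝ, FJr t = fromBlocks (mexp (t • A1r)) 0 0 0)
    (FNr : ℕ → Matrix (Fin rf ⊕ Fin ri) (Fin rf ⊕ Fin ri) ℝ)
    (hFNr : ∀ k : ℕ, FNr k = fromBlocks 0 0 0 (-(E2r ^ k)))
    -- improper-proper kernels of the full-order and reduced-order systems
    (hip : ℝ → ℕ → Fin m × Fin m → ℝ)
    (hhip : ∀ (t : ℝ) (k : ℕ), hip t k = vecm (Bᵀ * (FN k)ᵀ * M * FJ t * B))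
    (hipr : ℝ → ℕ → Fin m × Fin m → ℝ)
    (hhipr : ∀ (t : ℝ) (k : ℕ), hipr t k = vecm (Brᵀ * (FNr k)ᵀ * Mr * FJr t * Br))
    -- a (ν−1)-times continuously differentiable, square-integrable input with bounded
    -- derivatives
    (u : ℝ → Fin m → ℝ) (hu : ContDiff ℝ ((ν - 1 : ℕ) : ℕ∞) u)
    (husq : MeasureTheory.IntegrableOn (fun τ => enormSq (u τ)) (Set.Ioi 0))
    (hubd : ∀ k < ν, ∃ c : ℝ, ∀ t : ℝ, 0 ≤ t → Real.sqrt (enormSq (iteratedDeriv k u t)) ≤ c)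
    -- improper-proper outputs of the full-order and reduced-order systems
    (yip yipr : ℝ → ℝ)
    (hyip : ∀ t : ℝ, yip t = ∫ τ in Set.Ioc (0:ℝ) t,
      ∑ k ∈ Finset.range ν, dotv (hip (t - τ) k) (kron (u τ) (iteratedDeriv k u t)))
    (hyipr : ∀ t : ℝ, yipr t = ∫ τ in Set.Ioc (0:ℝ) t,
      ∑ k ∈ Finset.range ν, dotv (hipr (t - τ) k) (kron (u τ) (iteratedDeriv k u t)))
    -- the C^{ν−1}-norm and the L₂-norm of u
    (uC : ℝ)
    (huC : uC = ⨆ k : Fin ν, ⨆ t : {s : ℝ // 0 ≤ s},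
      Real.sqrt (enormSq (iteratedDeriv k.1 u t.1)))
    (uL2 : ℝ) (huL2 : uL2 = Real.sqrt (∫ τ in Set.Ioi (0:ℝ), enormSq (u τ)))
    -- the reduced proper and improper Gramians
    (Ppr : Matrix (Fin rf ⊕ Fin ri) (Fin rf ⊕ Fin ri) ℝ)
    (hPpr : Ppr = matIntIoi fun t => FJr t * Br * Brᵀ * (FJr t)ᵀ)
    (Pimpr : Matrix (Fin rf ⊕ Fin ri) (Fin rf ⊕ Fin ri) ℝ)
    (hPimpr : Pimpr = ∑ k ∈ Finset.range ν, FNr k * Br * Brᵀ * (FNr k)ᵀ)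
    -- the mixed proper and improper Gramians
    (Ptp : Matrix (Fin nf ⊕ Fin ni) (Fin rf ⊕ Fin ri) ℝ)
    (hPtp : Ptp = matIntIoi fun t => FJ t * B * Brᵀ * (FJr t)ᵀ)
    (Pti : Matrix (Fin nf ⊕ Fin ni) (Fin rf ⊕ Fin ri) ℝ)
    (hPti : Pti = ∑ k ∈ Finset.range ν, FN k * B * Brᵀ * (FNr k)ᵀ)
    :
    ∀ t : ℝ, 0 ≤ t → |yip t - yipr t| ≤
      Real.sqrt (Matrix.trace (Pp * M * Pimp * M) - 2 * Matrix.trace (Ptpᵀ * M * Pti * Mr) +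
        Matrix.trace (Ppr * Mr * Pimpr * Mr)) * Real.sqrt (ν : ℝ) * uC * uL2 :=
  improper_proper_output_error_trace_bound_general ν Winv Tinv J C α hα hJ B M hM FJ hFJ FN Pp hPp
    Pimp hPimp A1r Cr αr hαr hA1r Br Mr hMr FJr hFJr FNr hip hhip hipr hhipr u hu husq hubd yip yipr
    hyip hyipr uC huC uL2 huL2 Ppr hPpr Pimpr hPimpr Ptp hPtp Pti hPti
end

section
/- The proper controllability Gramian P_p := ∫₀^∞ F_J(t)·B·B^T·F_J(t)^T dt is well defined and solves the projected continuous-time Lyapunov equation E·P_p·A^T + A·P_p·E^T = −P_l·B·B^T·P_l^T together with the projection condition P_p = P_r·P_p·P_r^T. -/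
open MeasureTheory Matrix

/-!
In Weierstraß coordinates the integrand is `T⁻¹ · diag(S t, 0) · T⁻ᵀ` with
`S t = e^{tJ} Q e^{tJ}ᵀ`, where `Q` is the leading block of `W⁻¹ B Bᵀ W⁻ᵀ`. The bound on `e^{tJ}`
makes `S t` decay like `e^{-2αt}`, so `S` is integrable; since `S' = J S + S Jᵀ`, `S 0 = Q` and
`S t → 0`, the fundamental theorem of calculus gives `J Σ + Σ Jᵀ = -Q` for `Σ = ∫₀^∞ S`.
Transporting this back through `W` and `T` gives the projected Lyapunov equation, and the
projection identity holds because `T P_p Tᵀ = diag(Σ, 0)`.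
-/

open Filter Topology Set

section Analysis

variable {𝔸 : Type*} [NormedRing 𝔸] [NormedAlgebra ℝ 𝔸] [CompleteSpace 𝔸]

theorem hasDerivAt_exp_smul_mul_mul_exp_smul (J K Q : 𝔸) (t : ℝ) :
    HasDerivAt (fun s : ℝ => NormedSpace.exp (s • J) * Q * NormedSpace.exp (s • K))
      (J * (NormedSpace.exp (t • J) * Q * NormedSpace.exp (t • K))
        + NormedSpace.exp (t • J) * Q * NormedSpace.exp (t • K) * K) t := by
  have h := ((hasDerivAt_exp_smul_const' J t).mul_const Q).fun_mul (hasDerivAt_exp_smul_const K t)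
  exact h.congr_deriv (by simp only [mul_assoc])

theorem sylvester_integral_Ioi_exp_smul (J K Q : 𝔸)
    (hint : IntegrableOn (fun t : ℝ => NormedSpace.exp (t • J) * Q * NormedSpace.exp (t • K))
      (Ioi 0))
    (hlim : Tendsto (fun t : ℝ => NormedSpace.exp (t • J) * Q * NormedSpace.exp (t • K))
      atTop (𝓝 0)) :
    J * (∫ t : ℝ in Ioi 0, NormedSpace.exp (t • J) * Q * NormedSpace.exp (t • K))
      + (∫ t : ℝ in Ioi 0, NormedSpace.exp (t • J) * Q * NormedSpace.exp (t • K)) * K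
      = -Q := by
  have hftc := integral_Ioi_of_hasDerivAt_of_tendsto' (a := 0)
    (fun t _ => hasDerivAt_exp_smul_mul_mul_exp_smul J K Q t)
    ((hint.const_mul J).add (hint.mul_const K)) hlim
  rw [integral_add (hint.const_mul J) (hint.mul_const K), integral_const_mul_of_integrable hint,
    integral_mul_const_of_integrable hint] at hftc
  simpa using hftc

theorem integrableOn_Ioi_of_norm_le_exp {E : Type*} [NormedAddCommGroup E] {f : ℝ → E}
    {c γ : ℝ} (hγ : 0 < γ) (hf : Continuous f)
    (hbound : ∀ t, 0 ≤ t → ‖f t‖ ≤ c * Real.exp (-γ * t)) :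
    IntegrableOn f (Ioi 0) := by
  refine ((exp_neg_integrableOn_Ioi 0 hγ).const_mul c).mono' hf.aestronglyMeasurable.restrict ?_
  filter_upwards [ae_restrict_mem measurableSet_Ioi] with t ht
  exact hbound t (le_of_lt ht)

theorem tendsto_zero_of_norm_le_exp {E : Type*} [NormedAddCommGroup E] {f : ℝ → E}
    {c γ : ℝ} (hγ : 0 < γ) (hbound : ∀ t, 0 ≤ t → ‖f t‖ ≤ c * Real.exp (-γ * t)) :
    Tendsto f atTop (𝓝 0) := by
  refine squeeze_zero_norm' (eventually_atTop.2 ⟨0, hbound⟩) ?_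
  simpa using (Real.tendsto_exp_atBot.comp
    (tendsto_id.const_mul_atTop_of_neg (neg_lt_zero.2 hγ))).const_mul c

end Analysis

-- Under this instance `‖X‖` unfolds to `opNorm X`, the norm in the decay hypothesis on `e^{tJ}`.
open scoped Matrix.Norms.L2Operator

section MatrixNorm

variable {l n : Type*} [Fintype l] [Fintype n] [DecidableEq n]

theorem Matrix.l2_opNorm_transpose_real [DecidableEq l] (X : Matrix l n ℝ) :
    ‖Xᵀ‖ = ‖X‖ := by
  rw [← Matrix.conjTranspose_eq_transpose_of_trivial, Matrix.l2_opNorm_conjTranspose]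

theorem Matrix.l2_opNorm_mul_mul_transpose_le (X Q : Matrix n n ℝ) :
    ‖X * Q * Xᵀ‖ ≤ ‖Q‖ * ‖X‖ ^ 2 :=
  calc ‖X * Q * Xᵀ‖ ≤ ‖X‖ * ‖Q‖ * ‖Xᵀ‖ := (norm_mul_le _ _).trans
        (mul_le_mul_of_nonneg_right (norm_mul_le _ _) (norm_nonneg _))
    _ = ‖Q‖ * ‖X‖ ^ 2 := by rw [Matrix.l2_opNorm_transpose_real]; ring

theorem MeasureTheory.IntegrableOn.matIntegrableIoi {F : ℝ → Matrix l n ℝ}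
    (hF : IntegrableOn F (Ioi 0)) :
    MatIntegrableIoi F :=
  fun i j => (Matrix.entryLinearMap ℝ ℝ i j).toContinuousLinearMap.integrable_comp hF

theorem matIntIoi_eq_integral {F : ℝ → Matrix l n ℝ} (hF : IntegrableOn F (Ioi 0)) :
    matIntIoi F = ∫ t in Ioi 0, F t := by
  ext i j
  exact (Matrix.entryLinearMap ℝ ℝ i j).toContinuousLinearMap.integral_comp_comm hF

variable {k : Type*} [Fintype k] [DecidableEq k] [DecidableEq l]

def Matrix.sandwichFromBlocks (P R : Matrix (l ⊕ k) (l ⊕ k) ℝ) :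
    Matrix l l ℝ →ₗ[ℝ] Matrix (l ⊕ k) (l ⊕ k) ℝ :=
  { toFun := fun X => P * Matrix.fromBlocks X 0 0 0 * R
    map_add' := fun X Y => by
      simp only [← Matrix.mul_add, ← Matrix.add_mul, Matrix.fromBlocks_add, add_zero]
    map_smul' := fun c X => by
      rw [show (Matrix.fromBlocks (c • X) 0 0 0 : Matrix (l ⊕ k) (l ⊕ k) ℝ) =
        c • Matrix.fromBlocks X 0 0 0 by simp [Matrix.fromBlocks_smul]]
      simp }

theorem MeasureTheory.IntegrableOn.mul_fromBlocks_mul {S : ℝ → Matrix l l ℝ} {s : Set ℝ}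
    (hS : IntegrableOn S s) (P R : Matrix (l ⊕ k) (l ⊕ k) ℝ) :
    IntegrableOn (fun t => P * Matrix.fromBlocks (S t) 0 0 0 * R) s :=
  (Matrix.sandwichFromBlocks P R).toContinuousLinearMap.integrable_comp hS

theorem integral_mul_fromBlocks_mul {S : ℝ → Matrix l l ℝ} {s : Set ℝ}
    (hS : IntegrableOn S s) (P R : Matrix (l ⊕ k) (l ⊕ k) ℝ) :
    ∫ t in s, P * Matrix.fromBlocks (S t) 0 0 0 * R
      = P * Matrix.fromBlocks (∫ t in s, S t) 0 0 0 * R :=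
  (Matrix.sandwichFromBlocks P R).toContinuousLinearMap.integral_comp_comm hS

end MatrixNorm

theorem mexp_smul_transpose {d : ℕ} (J : Matrix (Fin d) (Fin d) ℝ) (t : ℝ) :
    mexp (t • Jᵀ) = (mexp (t • J))ᵀ := by
  rw [mexp, mexp, ← Matrix.exp_transpose, Matrix.transpose_smul]

theorem integrableOn_exp_gramian_and_lyapunov {d : ℕ} (J Q : Matrix (Fin d) (Fin d) ℝ)
    {C α : ℝ} (hα : 0 < α)
    (hJ : ∀ t : ℝ, 0 ≤ t → opNorm (mexp (t • J)) ≤ C * Real.exp (-α * t)) :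
    IntegrableOn (fun t : ℝ => mexp (t • J) * Q * (mexp (t • J))ᵀ) (Ioi 0) ∧
      J * (∫ t : ℝ in Ioi 0, mexp (t • J) * Q * (mexp (t • J))ᵀ)
        + (∫ t : ℝ in Ioi 0, mexp (t • J) * Q * (mexp (t • J))ᵀ) * Jᵀ = -Q := by
  have hS : (fun t : ℝ => mexp (t • J) * Q * (mexp (t • J))ᵀ)
      = fun t => NormedSpace.exp (t • J) * Q * NormedSpace.exp (t • Jᵀ) := by
    funext t; rw [← mexp_smul_transpose]; rfl
  have hbound : ∀ t : ℝ, 0 ≤ t →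
      ‖mexp (t • J) * Q * (mexp (t • J))ᵀ‖ ≤ ‖Q‖ * C ^ 2 * Real.exp (-(2 * α) * t) := by
    intro t ht
    calc ‖mexp (t • J) * Q * (mexp (t • J))ᵀ‖ ≤ ‖Q‖ * ‖mexp (t • J)‖ ^ 2 :=
          Matrix.l2_opNorm_mul_mul_transpose_le _ _
      _ ≤ ‖Q‖ * (C * Real.exp (-α * t)) ^ 2 := by
          gcongr; exact hJ t ht
      _ = ‖Q‖ * C ^ 2 * Real.exp (-(2 * α) * t) := by
          rw [mul_pow, ← Real.exp_nat_mul]; ring_nf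
  have hcont : Continuous fun t : ℝ => mexp (t • J) * Q * (mexp (t • J))ᵀ := by
    rw [hS]
    exact continuous_iff_continuousAt.2 fun t =>
      (hasDerivAt_exp_smul_mul_mul_exp_smul J Jᵀ Q t).continuousAt
  have hint := integrableOn_Ioi_of_norm_le_exp (by positivity) hcont hbound
  refine ⟨hint, ?_⟩
  rw [hS] at hint ⊢
  exact sylvester_integral_Ioi_exp_smul J Jᵀ Q hint
    (hS ▸ tendsto_zero_of_norm_le_exp (by positivity) hbound)

section BlockAlgebra

variable {R l k : Type*} [CommRing R] [Fintype l] [Fintype k] [DecidableEq k]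

theorem Matrix.mul_mul_mul_transpose_cancel {n : Type*} [Fintype n] [DecidableEq n]
    {T Tinv : Matrix n n R} (hT : T * Tinv = 1) (W D X V D' : Matrix n n R) :
    W * D * T * (Tinv * X * Tinvᵀ) * (V * D' * T)ᵀ = W * (D * X * D'ᵀ) * Vᵀ := by
  have hTt : Tinvᵀ * Tᵀ = 1 := by rw [← Matrix.transpose_mul, hT, Matrix.transpose_one]
  calc W * D * T * (Tinv * X * Tinvᵀ) * (V * D' * T)ᵀ
      = W * D * (T * Tinv) * X * (Tinvᵀ * Tᵀ) * D'ᵀ * Vᵀ := by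
        simp only [Matrix.transpose_mul, Matrix.mul_assoc]
    _ = W * (D * X * D'ᵀ) * Vᵀ := by
        rw [hT, hTt]; simp only [Matrix.mul_one, Matrix.mul_assoc]

theorem Matrix.fromBlocks_zero_mul_mul_transpose (H H' : Matrix l l R)
    (G : Matrix (l ⊕ k) (l ⊕ k) R) :
    fromBlocks H 0 0 0 * G * (fromBlocks H' 0 0 0)ᵀ
      = fromBlocks (H * G.toBlocks₁₁ * H'ᵀ) 0 0 0 := by
  conv_lhs => rw [← Matrix.fromBlocks_toBlocks G]
  simp [Matrix.fromBlocks_transpose, Matrix.fromBlocks_multiply]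

theorem Matrix.fromBlocks_diag_mul_mul_transpose (A A' : Matrix l l R) (D D' : Matrix k k R)
    (X : Matrix l l R) :
    fromBlocks A 0 0 D * fromBlocks X 0 0 0 * (fromBlocks A' 0 0 D')ᵀ
      = fromBlocks (A * X * A'ᵀ) 0 0 0 := by
  simp [Matrix.fromBlocks_transpose, Matrix.fromBlocks_multiply]

theorem weierstrass_lyapunov [DecidableEq l] {T Tinv : Matrix (l ⊕ k) (l ⊕ k) R}
    (hT : T * Tinv = 1)
    (W : Matrix (l ⊕ k) (l ⊕ k) R) (J X Q : Matrix l l R) (N : Matrix k k R)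
    (hX : J * X + X * Jᵀ = -Q) :
    W * fromBlocks 1 0 0 N * T * (Tinv * fromBlocks X 0 0 0 * Tinvᵀ)
        * (W * fromBlocks J 0 0 1 * T)ᵀ
      + W * fromBlocks J 0 0 1 * T * (Tinv * fromBlocks X 0 0 0 * Tinvᵀ)
        * (W * fromBlocks 1 0 0 N * T)ᵀ
      = -(W * fromBlocks Q 0 0 0 * Wᵀ) := by
  rw [Matrix.mul_mul_mul_transpose_cancel hT, Matrix.mul_mul_mul_transpose_cancel hT,
    Matrix.fromBlocks_diag_mul_mul_transpose, Matrix.fromBlocks_diag_mul_mul_transpose,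
    ← Matrix.add_mul, ← Matrix.mul_add, Matrix.fromBlocks_add]
  have hsum : 1 * X * Jᵀ + J * X * 1ᵀ = -Q := by
    rw [Matrix.one_mul, Matrix.transpose_one, Matrix.mul_one, add_comm, hX]
  have hneg : (fromBlocks (-Q) (0 + 0) (0 + 0) (0 + 0) : Matrix (l ⊕ k) (l ⊕ k) R)
      = -fromBlocks Q 0 0 0 := by
    simp only [add_zero, Matrix.fromBlocks_neg, neg_zero]
  rw [hsum, hneg, Matrix.mul_neg, Matrix.neg_mul]

theorem spectralProjector_mul_mul_transpose [DecidableEq l] {m : Type*} [Fintype m]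
    (W Winv : Matrix (l ⊕ k) (l ⊕ k) R) (B : Matrix (l ⊕ k) m R) :
    W * fromBlocks 1 0 0 0 * Winv * B * Bᵀ * (W * fromBlocks 1 0 0 0 * Winv)ᵀ
      = W * fromBlocks (Winv * B * (Winv * B)ᵀ).toBlocks₁₁ 0 0 0 * Wᵀ :=
  calc W * fromBlocks 1 0 0 0 * Winv * B * Bᵀ * (W * fromBlocks 1 0 0 0 * Winv)ᵀ
      = W * (fromBlocks 1 0 0 0 * (Winv * B * (Winv * B)ᵀ) * (fromBlocks 1 0 0 0)ᵀ) * Wᵀ := by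
        simp only [Matrix.transpose_mul, Matrix.mul_assoc]
    _ = _ := by
        rw [Matrix.fromBlocks_zero_mul_mul_transpose, Matrix.one_mul, Matrix.transpose_one,
          Matrix.mul_one]

end BlockAlgebra

theorem proper_controllability_gramian_general
    {nf ni m : ℕ}
    -- Weierstraß canonical form data for the full-order system
    (W T Winv Tinv : Matrix (Fin nf ⊕ Fin ni) (Fin nf ⊕ Fin ni) ℝ)
    (hT : T * Tinv = 1)
    (J : Matrix (Fin nf) (Fin nf) ℝ) (N : Matrix (Fin ni) (Fin ni) ℝ)
    (C α : ℝ) (hα : 0 < α)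
    (hJ : ∀ t : ℝ, 0 ≤ t → opNorm (mexp (t • J)) ≤ C * Real.exp (-α * t))
    (E A : Matrix (Fin nf ⊕ Fin ni) (Fin nf ⊕ Fin ni) ℝ)
    (hE : E = W * fromBlocks 1 0 0 N * T)
    (hA : A = W * fromBlocks J 0 0 1 * T)
    (B : Matrix (Fin nf ⊕ Fin ni) (Fin m) ℝ)
    -- spectral projectors
    (Pr Pl : Matrix (Fin nf ⊕ Fin ni) (Fin nf ⊕ Fin ni) ℝ)
    (hPr : Pr = Tinv * fromBlocks 1 0 0 0 * T)
    (hPl : Pl = W * fromBlocks 1 0 0 0 * Winv)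
    -- fundamental solution matrices
    (FJ : ℝ → Matrix (Fin nf ⊕ Fin ni) (Fin nf ⊕ Fin ni) ℝ)
    (hFJ : ∀ t : ℝ, FJ t = Tinv * fromBlocks (mexp (t • J)) 0 0 0 * Winv)
    -- proper and improper controllability Gramians
    (Pp : Matrix (Fin nf ⊕ Fin ni) (Fin nf ⊕ Fin ni) ℝ)
    (hPp : Pp = matIntIoi fun t => FJ t * B * Bᵀ * (FJ t)ᵀ)
    :
    MatIntegrableIoi (fun t => FJ t * B * Bᵀ * (FJ t)ᵀ) ∧
      E * Pp * Aᵀ + A * Pp * Eᵀ = -(Pl * B * Bᵀ * Plᵀ) ∧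
      Pp = Pr * Pp * Prᵀ := by
  set Q := (Winv * B * (Winv * B)ᵀ).toBlocks₁₁
  obtain ⟨hSint, hLyap⟩ := integrableOn_exp_gramian_and_lyapunov J Q hα hJ
  set Sig := ∫ t : ℝ in Ioi 0, mexp (t • J) * Q * (mexp (t • J))ᵀ
  have hΦ : (fun t => FJ t * B * Bᵀ * (FJ t)ᵀ) = fun t =>
      Tinv * fromBlocks (mexp (t • J) * Q * (mexp (t • J))ᵀ) 0 0 0 * Tinvᵀ := by
    funext t
    rw [hFJ, ← Matrix.fromBlocks_zero_mul_mul_transpose]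
    simp only [Matrix.transpose_mul, Matrix.mul_assoc]
  have hΦint := hSint.mul_fromBlocks_mul Tinv Tinvᵀ
  have hPpSig : Pp = Tinv * fromBlocks Sig 0 0 0 * Tinvᵀ := by
    rw [hPp, hΦ, matIntIoi_eq_integral hΦint, integral_mul_fromBlocks_mul hSint]
  refine ⟨hΦ ▸ hΦint.matIntegrableIoi, ?_, ?_⟩
  · rw [hPpSig, hE, hA, hPl, spectralProjector_mul_mul_transpose]
    exact weierstrass_lyapunov hT W J Sig Q N hLyap
  · rw [hPpSig, hPr, Matrix.mul_mul_mul_transpose_cancel hT,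
      Matrix.fromBlocks_zero_mul_mul_transpose]
    simp

/-- The proper controllability Gramian `P_p = ∫₀^∞ F_J(t)·B·Bᵀ·F_J(t)ᵀ dt` is
well defined and solves the projected continuous-time Lyapunov equation
`E·P_p·Aᵀ + A·P_p·Eᵀ = −P_l·B·Bᵀ·P_lᵀ` together with `P_p = P_r·P_p·P_rᵀ`. -/
theorem proper_controllability_gramian
    {nf ni m : ℕ} (hm : 0 < m) (ν : ℕ) (hν : 0 < ν)
    -- Weierstraß canonical form data for the full-order system
    (W T Winv Tinv : Matrix (Fin nf ⊕ Fin ni) (Fin nf ⊕ Fin ni) ℝ)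
    (hW : W * Winv = 1) (hW' : Winv * W = 1)
    (hT : T * Tinv = 1) (hT' : Tinv * T = 1)
    (J : Matrix (Fin nf) (Fin nf) ℝ) (N : Matrix (Fin ni) (Fin ni) ℝ) (hN : N ^ ν = 0)
    (C α : ℝ) (hC : 0 < C) (hα : 0 < α)
    (hJ : ∀ t : ℝ, 0 ≤ t → opNorm (mexp (t • J)) ≤ C * Real.exp (-α * t))
    (E A : Matrix (Fin nf ⊕ Fin ni) (Fin nf ⊕ Fin ni) ℝ)
    (hE : E = W * fromBlocks 1 0 0 N * T)
    (hA : A = W * fromBlocks J 0 0 1 * T)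
    (B : Matrix (Fin nf ⊕ Fin ni) (Fin m) ℝ)
    (M : Matrix (Fin nf ⊕ Fin ni) (Fin nf ⊕ Fin ni) ℝ) (hM : M.IsSymm)
    -- spectral projectors
    (Pr Pl : Matrix (Fin nf ⊕ Fin ni) (Fin nf ⊕ Fin ni) ℝ)
    (hPr : Pr = Tinv * fromBlocks 1 0 0 0 * T)
    (hPl : Pl = W * fromBlocks 1 0 0 0 * Winv)
    -- fundamental solution matrices
    (FJ : ℝ → Matrix (Fin nf ⊕ Fin ni) (Fin nf ⊕ Fin ni) ℝ)
    (hFJ : ∀ t : ℝ, FJ t = Tinv * fromBlocks (mexp (t • J)) 0 0 0 * Winv)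
    (FN : ℕ → Matrix (Fin nf ⊕ Fin ni) (Fin nf ⊕ Fin ni) ℝ)
    (hFN : ∀ k : ℕ, FN k = Tinv * fromBlocks 0 0 0 (-(N ^ k)) * Winv)
    -- proper and improper controllability Gramians
    (Pp : Matrix (Fin nf ⊕ Fin ni) (Fin nf ⊕ Fin ni) ℝ)
    (hPp : Pp = matIntIoi fun t => FJ t * B * Bᵀ * (FJ t)ᵀ)
    (Pimp : Matrix (Fin nf ⊕ Fin ni) (Fin nf ⊕ Fin ni) ℝ)
    (hPimp : Pimp = ∑ k ∈ Finset.range ν, FN k * B * Bᵀ * (FN k)ᵀ)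
    :
    MatIntegrableIoi (fun t => FJ t * B * Bᵀ * (FJ t)ᵀ) ∧
      E * Pp * Aᵀ + A * Pp * Eᵀ = -(Pl * B * Bᵀ * Plᵀ) ∧
      Pp = Pr * Pp * Prᵀ :=
  proper_controllability_gramian_general W T Winv Tinv hT J N C α hα hJ E A hE hA B Pr Pl hPr hPl FJ
    hFJ Pp hPp
end
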